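/- Define T : ℝ³ → ℝ² by T(z, s, v) = (if 0 ≤ s then z else v, s). Then the pushforward of the standard Gaussian measure γ₃ on ℝ³ under T equals the standard Gaussian measure γ₂ on ℝ². In particular, the first coordinate z·1(s ≥ 0) + v·1(s < 0) is standard Gaussian and independent of s. -/

import Mathlib

open MeasureTheory ProbabilityTheory

/-- The standard Gaussian measure on `EuclideanSpace ℝ (Fin d)`. -/
noncomputable def stdGaussian (d : ℕ) : Measure (EuclideanSpace ℝ (Fin d)) :=
  Measure.map (WithLp.toLp 2) (Measure.pi fun _ => gaussianReal 0 1)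

/-- The map `T(z, s, v) = (z·1(s ≥ 0) + v·1(s < 0), s)`. -/
noncomputable def switchMap (x : EuclideanSpace ℝ (Fin 3)) : EuclideanSpace ℝ (Fin 2) :=
  WithLp.toLp 2 ![if 0 ≤ x 1 then x 0 else x 2, x 1]

/-!
Read the triple as `(z, s, v)` with `z, v ∼ μ` and `s ∼ ν` independent. Which of `z`, `v` is
output is decided by `s` alone, and both have law `μ` independently of `s`; so the output has
law `μ ⊗ ν`, the two cases contributing `μ A * ν (B ∩ {p})` and `μ A * ν (B \ {p})` on a
rectangle `A ×ˢ B`. The theorem is the case `μ = ν = N(0, 1)`, `p s ↔ 0 ≤ s`.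
-/

section Switch

variable {α β : Type*} (p : β → Prop) [DecidablePred p]

def switchOn (x : α × β × α) : α × β :=
  (if p x.2.1 then x.1 else x.2.2, x.2.1)

lemma switchOn_preimage_prod (A : Set α) (B : Set β) :
    switchOn p ⁻¹' A ×ˢ B =
      A ×ˢ ((B ∩ {s | p s}) ×ˢ Set.univ) ∪ Set.univ ×ˢ ((B \ {s | p s}) ×ˢ A) := by
  ext ⟨z, s, v⟩
  by_cases hs : p s <;> simp [switchOn, hs, and_comm]

variable {p} [MeasurableSpace α] [MeasurableSpace β]

lemma measurable_switchOn (hp : MeasurableSet {s | p s}) : Measurable (switchOn (α := α) p) :=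
  (Measurable.ite (measurable_fst.comp measurable_snd hp) measurable_fst
    (measurable_snd.comp measurable_snd)).prodMk (measurable_fst.comp measurable_snd)

theorem measurePreserving_switchOn {μ : Measure α} [IsProbabilityMeasure μ] {ν : Measure β}
    [SigmaFinite ν] (hp : MeasurableSet {s | p s}) :
    MeasurePreserving (switchOn p) (μ.prod (ν.prod μ)) (μ.prod ν) := by
  refine ⟨measurable_switchOn hp, (Measure.prod_eq fun A B hA hB => ?_).symm⟩
  have hdisj : Disjoint (A ×ˢ ((B ∩ {s | p s}) ×ˢ Set.univ))
      (Set.univ ×ˢ ((B \ {s | p s}) ×ˢ A)) :=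
    Set.disjoint_prod.2 <| Or.inr <| Set.disjoint_prod.2 <| Or.inl <|
      Set.disjoint_sdiff_right.mono_left Set.inter_subset_right
  rw [Measure.map_apply (measurable_switchOn hp) (hA.prod hB), switchOn_preimage_prod,
    measure_union hdisj (MeasurableSet.univ.prod ((hB.diff hp).prod hA)),
    Measure.prod_prod, Measure.prod_prod, Measure.prod_prod, Measure.prod_prod,
    measure_univ, ← measure_inter_add_sdiff B hp]
  ring

end Switch

lemma measurePreserving_finThreeArrow {α : Type*} [MeasurableSpace α] (μ : Measure α)
    [SigmaFinite μ] :
    MeasurePreserving (fun x : Fin 3 → α => (x 0, x 1, x 2))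
      (Measure.pi fun _ => μ) (μ.prod (μ.prod μ)) :=
  ((MeasurePreserving.id μ).prod (measurePreserving_finTwoArrow μ)).comp
    (measurePreserving_piFinSuccAbove (fun _ => μ) 0)

-- `_root_` because Mathlib also has `ProbabilityTheory.stdGaussian`.
lemma measurePreserving_toLp_stdGaussian (d : ℕ) :
    MeasurePreserving (MeasurableEquiv.toLp 2 (Fin d → ℝ))
      (Measure.pi fun _ => gaussianReal 0 1) (_root_.stdGaussian d) :=
  ⟨(MeasurableEquiv.toLp 2 _).measurable, rfl⟩

/-- The pushforward of the standard Gaussian `γ₃` under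
`T(z, s, v) = (if 0 ≤ s then z else v, s)` is the standard Gaussian `γ₂`; in
particular, the first coordinate is standard Gaussian and independent of `s`. -/
theorem map_switchMap_stdGaussian :
    Measure.map switchMap (stdGaussian 3) = stdGaussian 2 := by
  -- the composite below unfolds to `switchMap`
  exact ((measurePreserving_toLp_stdGaussian 2).comp <|
    (measurePreserving_finTwoArrow _).symm.comp <|
    (measurePreserving_switchOn (p := (0 ≤ ·)) measurableSet_Ici).comp <|
    (measurePreserving_finThreeArrow _).comp (measurePreserving_toLp_stdGaussian 3).symm).map_eq
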